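/- arXiv:1607.06985 — 2 statements merged into one kernel-verified Lean document; each statement's English description precedes it below -/
import Mathlib

section
/- Fix n ∈ ℕ, a tetra-closed set G of triples of Fin n, and a threshold t ∈ ℕ with n > 4 + 4t. Let x, y, z, v be four distinct vertices of Fin n such that {x,y,v} ∈ G and each of the four edges {v,x}, {x,z}, {z,y}, {y,v} is t-good. Then {x,y,z} ∈ G. -/
/-- A set `G` of triples of `Fin n` is tetra-closed if for every 4-element
subset `s` of `Fin n`, whenever three of the four 3-element subsets of `s`
belong to `G`, so does the fourth. -/
def TetraClosed {n : ℕ} (G : Finset (Finset (Fin n))) : Prop :=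
  ∀ s : Finset (Fin n), s.card = 4 →
    ∀ f ∈ s.powersetCard 3, (∀ g ∈ s.powersetCard 3, g ≠ f → g ∈ G) → f ∈ G

/-- The bad triples (triples of `Fin n` not in `G`) containing the edge `e`. -/
def badTriplesOn {n : ℕ} (G : Finset (Finset (Fin n))) (e : Finset (Fin n)) :
    Finset (Finset (Fin n)) :=
  ((Finset.univ : Finset (Fin n)).powersetCard 3).filter (fun f => e ⊆ f ∧ f ∉ G)

/-!
A `t`-good edge `{a, b}` rules out at most `t` apexes `w` (those with `{a, b, w}` bad), so since
`n > 4 + 4t` some `w` outside `{x, y, z, v}` makes all four triangles `vxw, xzw, zyw, yvw` good.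
Tetra-closure on `{x, y, v, w}` then carries goodness from `xyv` to `xyw`, and on `{x, y, z, w}`
from `xyw` to `xyz`.
-/

open Finset

lemma Finset.exists_eq_erase_of_subset_of_card_add_one {α : Type*} [DecidableEq α]
    {s t : Finset α} (hts : t ⊆ s) (hcard : #t + 1 = #s) : ∃ a ∈ s, t = s.erase a := by
  obtain ⟨a, has, hat⟩ := exists_mem_notMem_of_card_lt_card (by omega : #t < #s)
  refine ⟨a, has, eq_of_subset_of_card_le (fun u hu => mem_erase.2 ⟨?_, hts hu⟩) ?_⟩
  · rintro rfl; exact hat hu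
  · rw [card_erase_of_mem has]; omega

variable {n : ℕ} {G : Finset (Finset (Fin n))}

lemma TetraClosed.mem_of_three (hG : TetraClosed G)
    {a b c d : Fin n} (hab : a ≠ b) (hac : a ≠ c) (had : a ≠ d)
    (hbc : b ≠ c) (hbd : b ≠ d) (hcd : c ≠ d)
    (habd : {a, b, d} ∈ G) (hacd : {a, c, d} ∈ G) (hbcd : {b, c, d} ∈ G) :
    {a, b, c} ∈ G := by
  have hs : #{a, b, c, d} = 4 := by simp [*]
  refine hG _ hs _ (mem_powersetCard.2 ⟨by grind, by simp [*]⟩) fun g hg hne => ?_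
  obtain ⟨hgs, hgc⟩ := mem_powersetCard.1 hg
  obtain ⟨e, he, rfl⟩ := exists_eq_erase_of_subset_of_card_add_one hgs (by omega)
  simp only [mem_insert, mem_singleton] at he
  rcases he with rfl | rfl | rfl | rfl <;> simp_all [erase_insert_of_ne]

variable (G) in
def badApexes (a b : Fin n) : Finset (Fin n) :=
  {w | w ≠ a ∧ w ≠ b ∧ {a, b, w} ∉ G}

lemma card_badApexes_le {a b : Fin n} (hab : a ≠ b) :
    #(badApexes G a b) ≤ #(badTriplesOn G {a, b}) := by
  refine card_le_card_of_injOn (fun w => {a, b, w}) (fun w hw => ?_) fun w hw w' hw' h => ?_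
  · simp only [badApexes, mem_coe, mem_filter, mem_univ, true_and] at hw
    simp only [badTriplesOn, mem_coe, mem_filter, mem_powersetCard, subset_univ, true_and]
    refine ⟨?_, by grind, hw.2.2⟩
    simp [hab, hw.1.symm, hw.2.1.symm]
  · simp only [badApexes, mem_coe, mem_filter, mem_univ, true_and] at hw
    have : w ∈ ({a, b, w'} : Finset (Fin n)) := by simp only at h; simp [← h]
    simp_all

lemma exists_common_good_apex (t : ℕ) (S : Finset (Fin n)) (E : Finset (Fin n × Fin n))
    (hE : ∀ e ∈ E, e.1 ≠ e.2 ∧ e.1 ∈ S ∧ e.2 ∈ S)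
    (ht : ∀ e ∈ E, #(badTriplesOn G {e.1, e.2}) ≤ t) (hn : #S + #E * t < n) :
    ∃ w ∉ S, ∀ e ∈ E, {e.1, e.2, w} ∈ G := by
  have hcard : #(S ∪ E.biUnion fun e => badApexes G e.1 e.2) < #(univ : Finset (Fin n)) :=
    calc _ ≤ #S + ∑ e ∈ E, #(badApexes G e.1 e.2) :=
          (card_union_le _ _).trans (Nat.add_le_add_left card_biUnion_le _)
      _ ≤ #S + #E * t := by
          gcongr
          exact sum_le_card_nsmul _ _ _ fun e he => (card_badApexes_le (hE e he).1).trans (ht e he)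
      _ < _ := by simpa using hn
  obtain ⟨w, -, hw⟩ := exists_mem_notMem_of_card_lt_card hcard
  simp only [mem_union, mem_biUnion, not_or, not_exists, not_and] at hw
  refine ⟨w, hw.1, fun e he => ?_⟩
  have hwe := hw.2 e he
  simp only [badApexes, mem_filter, mem_univ, true_and, not_and, not_not] at hwe
  obtain ⟨-, h₁, h₂⟩ := hE e he
  exact hwe (ne_of_mem_of_not_mem h₁ hw.1).symm (ne_of_mem_of_not_mem h₂ hw.1).symm

theorem triangulation_square_general (n t : ℕ) (G : Finset (Finset (Fin n)))
    (hG : TetraClosed G)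
    (hn : n > 4 + 4 * t)
    (x y z v : Fin n)
    (hxy : x ≠ y) (hxz : x ≠ z) (hxv : x ≠ v)
    (hyz : y ≠ z) (hyv : y ≠ v)
    (hxyv : ({x, y, v} : Finset (Fin n)) ∈ G)
    (hvx : (badTriplesOn G {v, x}).card ≤ t)
    (hxz' : (badTriplesOn G {x, z}).card ≤ t)
    (hzy : (badTriplesOn G {z, y}).card ≤ t)
    (hyv' : (badTriplesOn G {y, v}).card ≤ t) :
    ({x, y, z} : Finset (Fin n)) ∈ G := by
  rw [pair_comm] at hvx hzy
  have hsize : #({x, y, z, v} : Finset (Fin n)) + #({(x, v), (x, z), (y, z), (y, v)} :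
      Finset (Fin n × Fin n)) * t < n :=
    calc _ ≤ 4 + 4 * t := add_le_add card_le_four (Nat.mul_le_mul_right t card_le_four)
      _ < n := hn
  obtain ⟨w, hwS, hw⟩ :=
    exists_common_good_apex (G := G) t _ _ (by simp [*]) (by simp [*]) hsize
  simp only [mem_insert, mem_singleton, not_or] at hwS
  obtain ⟨hwx, hwy, hwz, hwv⟩ := hwS
  have hxvw := hw (x, v) (by simp)
  have hxzw := hw (x, z) (by simp)
  have hyzw := hw (y, z) (by simp)
  have hyvw := hw (y, v) (by simp)
  have hxyw : {x, y, w} ∈ G := by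
    rw [pair_comm] at hxvw hyvw
    exact hG.mem_of_three hxy (Ne.symm hwx) hxv (Ne.symm hwy) hyv hwv hxyv hxvw hyvw
  exact hG.mem_of_three hxy hxz (Ne.symm hwx) hyz (Ne.symm hwy) (Ne.symm hwz) hxyw hxzw hyzw

/-- The triangulation step in the proof of Lemma 2.3: if `n > 4 + 4t`, `G` is
tetra-closed, the vertices `x, y, z, v` are pairwise distinct, `{x, y, v} ∈ G`
and the four edges `{v,x}`, `{x,z}`, `{z,y}`, `{y,v}` are each `t`-good, then
`{x, y, z} ∈ G`. -/
theorem triangulation_square (n t : ℕ) (G : Finset (Finset (Fin n)))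
    (hGtriples : ∀ f ∈ G, f.card = 3) (hG : TetraClosed G)
    (hn : n > 4 + 4 * t)
    (x y z v : Fin n)
    (hxy : x ≠ y) (hxz : x ≠ z) (hxv : x ≠ v)
    (hyz : y ≠ z) (hyv : y ≠ v) (hzv : z ≠ v)
    (hxyv : ({x, y, v} : Finset (Fin n)) ∈ G)
    (hvx : (badTriplesOn G {v, x}).card ≤ t)
    (hxz' : (badTriplesOn G {x, z}).card ≤ t)
    (hzy : (badTriplesOn G {z, y}).card ≤ t)
    (hyv' : (badTriplesOn G {y, v}).card ≤ t) :
    ({x, y, z} : Finset (Fin n)) ∈ G :=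
  triangulation_square_general n t G hG hn x y z v hxy hxz hxv hyz hyv hxyv hvx hxz' hzy hyv'
end

section
/- Fix n ∈ ℕ and a tetra-closed set G of triples of Fin n. Let W be a subset of Fin n, let v ∉ W, and suppose that every 3-element subset of W belongs to G. Consider the simple graph on W in which distinct x, y ∈ W are adjacent if and only if {v,x,y} ∈ G. If every two vertices of W are connected by a path in this graph, then {v,x,y} ∈ G for all distinct x, y ∈ W. -/
/-- The simple graph on `W` (viewed inside `Fin n`) in which distinct
`x, y ∈ W` are adjacent if and only if `{v, x, y} ∈ G`. -/
def linkGraph {n : ℕ} (G : Finset (Finset (Fin n))) (v : Fin n)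
    (W : Finset (Fin n)) : SimpleGraph (Fin n) where
  Adj x y := x ≠ y ∧ x ∈ W ∧ y ∈ W ∧ ({v, x, y} : Finset (Fin n)) ∈ G
  symm := by
    constructor
    rintro x y ⟨hxy, hx, hy, hG⟩
    refine ⟨hxy.symm, hy, hx, ?_⟩
    have h : ({v, y, x} : Finset (Fin n)) = {v, x, y} := by
      rw [Finset.pair_comm y x]
    rw [h]
    exact hG
  loopless := by constructor; rintro x ⟨h, -⟩; exact h rfl

/-!
Walk along a path `x = x₀, x₁, …, xₖ = y` in the link graph. By induction `{v, x₁, y}` is good,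
`{v, x, x₁}` is good because it is an edge, and `{x, x₁, y}` is good because it lies in `W`;
these are three faces of the tetrahedron `{v, x, x₁, y}`, so the fourth face `{v, x, y}` is good.
-/

theorem Finset.exists_erase_eq_of_subset_of_card_eq_succ {α : Type*} [DecidableEq α]
    {s t : Finset α} (hts : t ⊆ s) (hcard : s.card = t.card + 1) :
    ∃ a ∈ s, s.erase a = t :=
  (Finset.covBy_iff_card_sdiff_eq_one.2
    ⟨hts, by rw [Finset.card_sdiff_of_subset hts]; omega⟩).exists_finset_erase

namespace TetraClosed

variable {n : ℕ} {G : Finset (Finset (Fin n))}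

theorem erase_mem (hG : TetraClosed G) {s : Finset (Fin n)} (hs : s.card = 4)
    {a : Fin n} (ha : a ∈ s) (h : ∀ b ∈ s, b ≠ a → s.erase b ∈ G) : s.erase a ∈ G := by
  refine hG s hs _ (by simp [Finset.erase_subset, Finset.card_erase_of_mem ha, hs]) ?_
  intro g hg hga
  rw [Finset.mem_powersetCard] at hg
  obtain ⟨b, hb, rfl⟩ :=
    Finset.exists_erase_eq_of_subset_of_card_eq_succ hg.1 (by rw [hs, hg.2])
  exact h b hb (by rintro rfl; exact hga rfl)

theorem mem_of_three_faces (hG : TetraClosed G) {u x y z : Fin n}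
    (hux : u ≠ x) (huy : u ≠ y) (huz : u ≠ z) (hxy : x ≠ y) (hxz : x ≠ z) (hyz : y ≠ z)
    (hxyz : {x, y, z} ∈ G) (huxz : {u, x, z} ∈ G) (huyz : {u, y, z} ∈ G) :
    {u, x, y} ∈ G := by
  have hs : ({u, x, y, z} : Finset (Fin n)).card = 4 := by
    simp [Finset.card_insert_of_notMem, *]
  have h := hG.erase_mem hs (a := z) (by simp) ?_
  · simpa [Finset.erase_insert_of_ne, *] using h
  · intro b hb hbz
    simp only [Finset.mem_insert, Finset.mem_singleton, hbz, or_false] at hb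
    rcases hb with rfl | rfl | rfl <;> simp [Finset.erase_insert_of_ne, *]

theorem mem_of_linkGraph_walk (hG : TetraClosed G) {W : Finset (Fin n)} {v : Fin n}
    (hv : v ∉ W) (hW : ∀ f ⊆ W, f.card = 3 → f ∈ G) {x y : Fin n}
    (p : (linkGraph G v W).Walk x y) (hy : y ∈ W) (hxy : x ≠ y) : {v, x, y} ∈ G := by
  induction p with
  | nil => exact absurd rfl hxy
  | @cons x z y hadj p ih =>
    obtain ⟨hxz, hx, hz, hvxz⟩ := hadj
    by_cases hzy : z = y
    · exact hzy ▸ hvxz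
    have hxyz : {x, y, z} ∈ G := hW _ (by simp [Finset.insert_subset_iff, *])
      (by simp [Finset.card_insert_of_notMem, hxy, hxz, Ne.symm hzy])
    have hvyz : {v, y, z} ∈ G := Finset.pair_comm z y ▸ ih hy hzy
    exact hG.mem_of_three_faces (ne_of_mem_of_not_mem hx hv).symm
      (ne_of_mem_of_not_mem hy hv).symm (ne_of_mem_of_not_mem hz hv).symm
      hxy hxz (Ne.symm hzy) hxyz hvxz hvyz

end TetraClosed

theorem link_connected_all_good_general (n : ℕ) (G : Finset (Finset (Fin n)))
    (hG : TetraClosed G)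
    (W : Finset (Fin n)) (v : Fin n) (hv : v ∉ W)
    (hW : ∀ f ⊆ W, f.card = 3 → f ∈ G)
    (hconn : ∀ x ∈ W, ∀ y ∈ W, (linkGraph G v W).Reachable x y) :
    ∀ x ∈ W, ∀ y ∈ W, x ≠ y → ({v, x, y} : Finset (Fin n)) ∈ G := by
  intro x hx y hy hxy
  obtain ⟨p⟩ := hconn x hx y hy
  exact hG.mem_of_linkGraph_walk hv hW p hy hxy

/-- The key step in the proof of Lemma 3.8: if `G` is tetra-closed, every
triple inside `W` belongs to `G`, `v ∉ W`, and the link graph of `v` on `W`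
is connected (every two vertices of `W` are joined by a path), then
`{v, x, y} ∈ G` for all distinct `x, y ∈ W`. -/
theorem link_connected_all_good (n : ℕ) (G : Finset (Finset (Fin n)))
    (hGtriples : ∀ f ∈ G, f.card = 3) (hG : TetraClosed G)
    (W : Finset (Fin n)) (v : Fin n) (hv : v ∉ W)
    (hW : ∀ f ⊆ W, f.card = 3 → f ∈ G)
    (hconn : ∀ x ∈ W, ∀ y ∈ W, (linkGraph G v W).Reachable x y) :
    ∀ x ∈ W, ∀ y ∈ W, x ≠ y → ({v, x, y} : Finset (Fin n)) ∈ G :=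
  link_connected_all_good_general n G hG W v hv hW hconn
end
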